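/- arXiv:1509.08818 — 11 statements merged into one kernel-verified Lean document; each statement's English description precedes it below -/
import Mathlib

section
/- If a topological dynamical system (X,T) is multi-sensitive, then it is thickly sensitive. -/
open Set Metric Function

/-- `S_T(U, δ)`: times at which two points of `U` are separated by more than `δ`. -/
def SepTimes {X : Type*} [MetricSpace X] (T : X → X) (U : Set X) (δ : ℝ) : Set ℕ :=
  {n | ∃ x₁ ∈ U, ∃ x₂ ∈ U, δ < dist (T^[n] x₁) (T^[n] x₂)}

/-- `J_T(U, ε)`: the complement of `S_T(U, ε)`. -/
def EqTimes {X : Type*} [MetricSpace X] (T : X → X) (U : Set X) (ε : ℝ) : Set ℕ :=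
  {n | ∀ x₁ ∈ U, ∀ x₂ ∈ U, dist (T^[n] x₁) (T^[n] x₂) ≤ ε}

/-- A set of naturals is thick if it contains arbitrarily long runs of consecutive integers. -/
def Thick (S : Set ℕ) : Prop := ∀ k : ℕ, ∃ n : ℕ, ∀ i ≤ k, n + i ∈ S

/-- A set of naturals is syndetic if it has bounded gaps. -/
def Syndetic (S : Set ℕ) : Prop := ∃ m : ℕ, ∀ n : ℕ, ∃ i ≤ m, n + i ∈ S

/-- Thick sensitivity. -/
def ThicklySensitive {X : Type*} [MetricSpace X] (T : X → X) : Prop :=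
  ∃ δ > (0 : ℝ), ∀ U : Set X, IsOpen U → U.Nonempty → Thick (SepTimes T U δ)

/-- Multi-sensitivity. -/
def MultiSensitive {X : Type*} [MetricSpace X] (T : X → X) : Prop :=
  ∃ δ > (0 : ℝ), ∀ (k : ℕ) (U : Fin k → Set X),
    (∀ i, IsOpen (U i)) → (∀ i, (U i).Nonempty) → (⋂ i, SepTimes T (U i) δ).Nonempty

/-- A syndetically equicontinuous point. -/
def SyndEqPt {X : Type*} [MetricSpace X] (T : X → X) (x : X) : Prop :=
  ∀ ε > (0 : ℝ), ∃ U : Set X, IsOpen U ∧ x ∈ U ∧ Syndetic (EqTimes T U ε)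

/-- If a topological dynamical system is multi-sensitive, then it is thickly sensitive. -/
theorem multiSensitive_thicklySensitive {X : Type*} [MetricSpace X] [CompactSpace X]
    {T : X → X} (hT : Continuous T) (hTs : Surjective T)
    (h : MultiSensitive T) : ThicklySensitive T := by
  obtain ⟨δ, hδ, hms⟩ := h
  refine ⟨δ, hδ, fun U hUo hUne k => ?_⟩
  obtain ⟨z, hz⟩ := hUne
  set W : Set X := ⋂ m ∈ Finset.range (k+1), (T^[m]) ⁻¹' (Metric.ball (T^[m] z) (δ/2)) with hW
  have hWo : IsOpen W :=
    isOpen_biInter_finset fun m _ => (hT.iterate m).isOpen_preimage _ isOpen_ball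
  have hzW : z ∈ W := mem_iInter₂.2 fun m _ => mem_ball_self (by linarith)
  have hWsmall : ∀ m ≤ k, m ∉ SepTimes T W δ := by
    rintro m hm ⟨x, hx, y, hy, hd⟩
    have hx' := mem_iInter₂.1 hx m (Finset.mem_range.2 (Nat.lt_succ_of_le hm))
    have hy' := mem_iInter₂.1 hy m (Finset.mem_range.2 (Nat.lt_succ_of_le hm))
    rw [Set.mem_preimage, Metric.mem_ball] at hx' hy'
    have h1 := dist_triangle (T^[m] x) (T^[m] z) (T^[m] y)
    rw [dist_comm (T^[m] z) (T^[m] y)] at h1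
    linarith
  set U' : Fin (k+2) → Set X := fun i => if (i : ℕ) ≤ k then (T^[(i : ℕ)]) ⁻¹' U else W with hU'
  have hopen : ∀ i, IsOpen (U' i) := by
    intro i
    by_cases hi : (i : ℕ) ≤ k
    · simpa [hU', hi] using (hT.iterate (i : ℕ)).isOpen_preimage _ hUo
    · simpa [hU', hi] using hWo
  have hne : ∀ i, (U' i).Nonempty := by
    intro i
    by_cases hi : (i : ℕ) ≤ k
    · obtain ⟨x, hx⟩ := (hTs.iterate (i : ℕ)) z
      exact ⟨x, by simp [hU', hi, Set.mem_preimage, hx, hz]⟩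
    · exact ⟨z, by simp [hU', hi, hzW]⟩
  obtain ⟨n, hn⟩ := hms (k+2) U' hopen hne
  have hnS : ∀ i : Fin (k+2), n ∈ SepTimes T (U' i) δ := fun i => mem_iInter.1 hn i
  have hlast : n ∈ SepTimes T W δ := by
    have := hnS ⟨k+1, by omega⟩
    simpa [hU'] using this
  have hnk : k + 1 ≤ n := by
    by_contra hlt
    push_neg at hlt
    exact hWsmall n (by omega) hlast
  refine ⟨n - k, fun j hj => ?_⟩
  have hi : ((⟨k - j, by omega⟩ : Fin (k+2)) : ℕ) = k - j := rfl
  have := hnS ⟨k - j, by omega⟩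
  simp only [SepTimes, mem_setOf_eq] at this ⊢
  simp only [hU', hi, if_pos (Nat.sub_le k j)] at this
  obtain ⟨x, hx, y, hy, hd⟩ := this
  refine ⟨T^[k-j] x, hx, T^[k-j] y, hy, ?_⟩
  rw [← Function.iterate_add_apply, ← Function.iterate_add_apply]
  have heq : n - k + j + (k - j) = n := by omega
  rw [heq]
  exact hd
end

section
/- If a topological dynamical system (X,T) is transitive and thickly sensitive, then it is multi-sensitive. -/
open Set Metric Function

/-- Topological transitivity. -/
def TopTransitive {X : Type*} [MetricSpace X] (T : X → X) : Prop :=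
  ∀ U V : Set X, IsOpen U → U.Nonempty → IsOpen V → V.Nonempty →
    ∃ n : ℕ, 0 < n ∧ (U ∩ T^[n] ⁻¹' V).Nonempty

/-- From transitivity, a finite family of nonempty open sets admits a common nonempty open set
mapped into each of them at some time. -/
lemma exists_common_preimage {X : Type*} [MetricSpace X] [Nonempty X]
    {T : X → X} (hT : Continuous T) (htr : TopTransitive T) :
    ∀ (k : ℕ) (U : Fin k → Set X), (∀ i, IsOpen (U i)) → (∀ i, (U i).Nonempty) →
      ∃ V : Set X, IsOpen V ∧ V.Nonempty ∧ ∃ m : Fin k → ℕ, ∀ i, V ⊆ T^[m i] ⁻¹' (U i) := by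
  intro k
  induction k with
  | zero =>
    intro U _ _
    exact ⟨Set.univ, isOpen_univ, Set.univ_nonempty, fun i => i.elim0, fun i => i.elim0⟩
  | succ k ih =>
    intro U hUo hUne
    obtain ⟨V, hVo, hVne, m, hm⟩ := ih (fun i => U i.succ) (fun i => hUo i.succ)
      (fun i => hUne i.succ)
    obtain ⟨n, -, hne⟩ := htr V (U 0) hVo hVne (hUo 0) (hUne 0)
    refine ⟨V ∩ T^[n] ⁻¹' (U 0), hVo.inter ((hUo 0).preimage (hT.iterate n)), hne,
      Fin.cases n m, ?_⟩
    intro i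
    refine Fin.cases ?_ ?_ i
    · simpa using fun x hx => hx.2
    · intro j x hx
      exact hm j hx.1

/-- A transitive thickly sensitive system is multi-sensitive. -/
theorem transitive_thicklySensitive_multiSensitive {X : Type*} [MetricSpace X] [CompactSpace X]
    {T : X → X} (hT : Continuous T) (hTs : Surjective T)
    (htr : TopTransitive T) (h : ThicklySensitive T) : MultiSensitive T := by
  obtain ⟨δ, hδ, hth⟩ := h
  refine ⟨δ, hδ, ?_⟩
  intro k U hUo hUne
  cases k with
  | zero => simpa using Set.univ_nonempty
  | succ k =>
    have : Nonempty X := ⟨(hUne 0).choose⟩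
    obtain ⟨V, hVo, hVne, m, hm⟩ := exists_common_preimage hT htr _ U hUo hUne
    set M : ℕ := Finset.univ.sup m with hM
    obtain ⟨n, hn⟩ := hth V hVo hVne M
    refine ⟨n, Set.mem_iInter.2 fun i => ?_⟩
    obtain ⟨x₁, hx₁, x₂, hx₂, hd⟩ := hn (m i) (Finset.le_sup (Finset.mem_univ i))
    refine ⟨T^[m i] x₁, hm i hx₁, T^[m i] x₂, hm i hx₂, ?_⟩
    rw [← Function.iterate_add_apply, ← Function.iterate_add_apply]
    exact hd
end

section
/- Let (X,T) be a transitive dynamical system which is not thickly sensitive. Then every transitive point of (X,T) is syndetically equicontinuous. -/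
open Set Metric Function

/-- In a transitive, not thickly sensitive system,
every transitive point is syndetically equicontinuous. -/
theorem transPoint_syndEq_of_not_thicklySensitive {X : Type*} [MetricSpace X] [CompactSpace X]
    {T : X → X} (hT : Continuous T) (hTs : Surjective T)
    (htr : ∃ x : X, Dense (Set.range fun n : ℕ => T^[n] x))
    (hns : ¬ ThicklySensitive T) :
    ∀ x : X, Dense (Set.range fun n : ℕ => T^[n] x) → SyndEqPt T x := by
  intro x hx ε hε
  unfold ThicklySensitive Thick at hns
  push_neg at hns
  obtain ⟨U, hUo, hUne, k, hk⟩ := hns ε hε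
  obtain ⟨y, ⟨m, hm⟩, hyU⟩ := hx.exists_mem_open hUo hUne
  have hxV : x ∈ T^[m] ⁻¹' U := by simpa [hm] using hyU
  have key : ∀ s, s ∉ SepTimes T U ε → s + m ∈ EqTimes T (T^[m] ⁻¹' U) ε := by
    intro s hs y₁ hy₁ y₂ hy₂
    rw [Function.iterate_add_apply, Function.iterate_add_apply]
    by_contra h
    exact hs ⟨_, hy₁, _, hy₂, lt_of_not_ge h⟩
  refine ⟨T^[m] ⁻¹' U, hUo.preimage (hT.iterate m), hxV, m + k, fun n => ?_⟩
  rcases le_or_gt m n with h | h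
  · obtain ⟨i, hik, hi⟩ := hk (n - m)
    refine ⟨i, by omega, ?_⟩
    have : n + i = (n - m + i) + m := by omega
    rw [this]
    exact key _ hi
  · obtain ⟨i, hik, hi⟩ := hk 0
    rw [Nat.zero_add] at hi
    refine ⟨m - n + i, by omega, ?_⟩
    have : n + (m - n + i) = i + m := by omega
    rw [this]
    exact key _ hi
end

section
/- Let π₁: (X₁,T₁) → (Y₁,S₁) and π₂: (X₂,T₂) → (Y₂,S₂) be proximal factor maps between compact metric dynamical systems. Then the product map π₁ × π₂: (X₁×X₂, T₁×T₂) → (Y₁×Y₂, S₁×S₂) is proximal. -/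
/-!
Put `T = T₁ × T₂` and `π = π₁ × π₂`. If `π p = π p'`, pick a minimal point `(q, q')` of `T × T`
in the orbit closure of `(p, p')`. The relation `π q = π q'` is closed and invariant, so it
persists in the orbit closure. Projecting `(q, q')` to the pairs of `i`-th coordinates gives a
minimal point of `Tᵢ × Tᵢ` whose coordinates lie in one `πᵢ`-fibre; such a pair is proximal, and a
minimal proximal pair is diagonal. Hence `q = q'`, and a pair whose orbit closure meets the
diagonal is proximal.
-/

open Set Function Filter

def ProximalPair {X : Type*} [MetricSpace X] (T : X → X) (x x' : X) : Prop :=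
  Filter.liminf (fun n : ℕ => dist (T^[n] x) (T^[n] x')) Filter.atTop = 0

def orbitClosure {Z : Type*} [TopologicalSpace Z] (R : Z → Z) (z : Z) : Set Z :=
  closure (range fun n => R^[n] z)

/-- A point whose orbit closure is a minimal set. -/
def IsMinimalPoint {Z : Type*} [TopologicalSpace Z] (R : Z → Z) (z : Z) : Prop :=
  ∀ w ∈ orbitClosure R z, z ∈ orbitClosure R w

section OrbitClosure

variable {Z W : Type*} [TopologicalSpace Z] [TopologicalSpace W] {R : Z → Z} {R' : W → W}

theorem self_mem_orbitClosure (R : Z → Z) (z : Z) : z ∈ orbitClosure R z :=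
  subset_closure ⟨0, rfl⟩

theorem orbitClosure_subset_of_mapsTo {A : Set Z} (hA : IsClosed A) (hRA : MapsTo R A A)
    {z : Z} (hz : z ∈ A) : orbitClosure R z ⊆ A :=
  closure_minimal (range_subset_iff.2 fun n => hRA.iterate n hz) hA

theorem Function.Semiconj.mapsTo_orbitClosure {φ : Z → W} (hφ : Continuous φ)
    (h : Semiconj φ R R') (z : Z) : MapsTo φ (orbitClosure R z) (orbitClosure R' (φ z)) := by
  refine MapsTo.closure ?_ hφ
  rintro _ ⟨n, rfl⟩
  exact ⟨n, (h.iterate_right n z).symm⟩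

theorem mapsTo_orbitClosure_self (hR : Continuous R) (z : Z) :
    MapsTo R (orbitClosure R z) (orbitClosure R z) := by
  refine MapsTo.closure ?_ hR
  rintro _ ⟨n, rfl⟩
  exact ⟨n + 1, iterate_succ_apply' R n z⟩

theorem Function.Semiconj.orbitClosure_subset_image [CompactSpace Z] [T2Space W] {φ : Z → W}
    (hφ : Continuous φ) (h : Semiconj φ R R') (hR : Continuous R) (z : Z) :
    orbitClosure R' (φ z) ⊆ φ '' orbitClosure R z := by
  refine orbitClosure_subset_of_mapsTo (isClosed_closure.isCompact.image hφ).isClosed ?_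
    (mem_image_of_mem φ (self_mem_orbitClosure R z))
  rintro _ ⟨w, hw, rfl⟩
  exact ⟨R w, mapsTo_orbitClosure_self hR z hw, h w⟩

theorem Function.Semiconj.eq_of_mem_orbitClosure_prodMap [T2Space W] {φ : Z → W}
    (hφ : Continuous φ) (h : Semiconj φ R R') {z z' w w' : Z} (hz : φ z = φ z')
    (hw : (w, w') ∈ orbitClosure (Prod.map R R) (z, z')) : φ w = φ w' := by
  refine orbitClosure_subset_of_mapsTo (A := {p : Z × Z | φ p.1 = φ p.2})
    (isClosed_eq (hφ.comp continuous_fst) (hφ.comp continuous_snd)) ?_ hz hw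
  intro p (hp : φ p.1 = φ p.2)
  change φ (R p.1) = φ (R p.2)
  rw [h.eq, h.eq, hp]

theorem exists_isMinimalPoint_mem_orbitClosure [CompactSpace Z] (hR : Continuous R) (z : Z) :
    ∃ m ∈ orbitClosure R z, IsMinimalPoint R m := by
  set S : Set (Set Z) := {A | A.Nonempty ∧ IsClosed A ∧ MapsTo R A A}
  have hchain : ∀ c ⊆ S, IsChain (· ⊆ ·) c → c.Nonempty → ∃ lb ∈ S, ∀ s ∈ c, lb ⊆ s := by
    intro c hcS hc hne
    have : Nonempty c := hne.to_subtype
    refine ⟨⋂₀ c, ⟨?_, isClosed_sInter fun A hA => (hcS hA).2.1, ?_⟩,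
      fun _ => sInter_subset_of_mem⟩
    · have hdir : DirectedOn (· ⊇ ·) c := fun A hA B hB => (hc.total hA hB).elim
        (fun h => ⟨A, hA, subset_rfl, h⟩) (fun h => ⟨B, hB, h, subset_rfl⟩)
      exact IsCompact.nonempty_sInter_of_directed_nonempty_isCompact_isClosed
        hdir (fun A hA => (hcS hA).1) (fun A hA => (hcS hA).2.1.isCompact)
        (fun A hA => (hcS hA).2.1)
    · exact fun a ha A hA => (hcS hA).2.2 (ha A hA)
  have horbit : ∀ a, orbitClosure R a ∈ S := fun a =>
    ⟨⟨a, self_mem_orbitClosure R a⟩, isClosed_closure, mapsTo_orbitClosure_self hR a⟩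
  obtain ⟨M, hMz, hM⟩ := zorn_superset_nonempty S hchain _ (horbit z)
  have horbit_eq : ∀ a ∈ M, orbitClosure R a = M := fun a ha =>
    have hsub := orbitClosure_subset_of_mapsTo hM.prop.2.1 hM.prop.2.2 ha
    hsub.antisymm (hM.le_of_le (horbit a) hsub)
  obtain ⟨m, hm⟩ := hM.prop.1
  refine ⟨m, hMz hm, fun w hw => ?_⟩
  rw [horbit_eq m hm] at hw
  rwa [horbit_eq w hw]

theorem IsMinimalPoint.mem_of_mapsTo {m w : Z} (hm : IsMinimalPoint R m)
    (hw : w ∈ orbitClosure R m) {A : Set Z} (hA : IsClosed A) (hRA : MapsTo R A A)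
    (hwA : w ∈ A) : m ∈ A :=
  orbitClosure_subset_of_mapsTo hA hRA hwA (hm w hw)

theorem IsMinimalPoint.map [CompactSpace Z] [T2Space W] {φ : Z → W} (hφ : Continuous φ)
    (h : Semiconj φ R R') (hR : Continuous R) {m : Z} (hm : IsMinimalPoint R m) :
    IsMinimalPoint R' (φ m) := by
  intro _ hw'
  obtain ⟨w, hw, rfl⟩ := h.orbitClosure_subset_image hφ hR m hw'
  exact h.mapsTo_orbitClosure hφ w (hm w hw)

end OrbitClosure

section Proximal

variable {X : Type*} [MetricSpace X] [CompactSpace X] {T : X → X}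

theorem proximalPair_iff_frequently_dist_lt {x x' : X} :
    ProximalPair T x x' ↔ ∀ ε > 0, ∃ᶠ n in atTop, dist (T^[n] x) (T^[n] x') < ε := by
  have hbdd : IsBoundedUnder (· ≤ ·) atTop fun n => dist (T^[n] x) (T^[n] x') :=
    isBoundedUnder_of ⟨Metric.diam (univ : Set X), fun n =>
      Metric.dist_le_diam_of_mem isCompact_univ.isBounded trivial trivial⟩
  have hnonneg : 0 ≤ liminf (fun n => dist (T^[n] x) (T^[n] x')) atTop :=
    le_liminf_of_le hbdd.isCoboundedUnder_ge (Eventually.of_forall fun _ => dist_nonneg)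
  rw [ProximalPair, ← liminf_le_iff hbdd.isCoboundedUnder_ge
    (isBoundedUnder_of ⟨0, fun _ => dist_nonneg⟩)]
  exact ⟨le_of_eq, fun h => h.antisymm hnonneg⟩

theorem proximalPair_iff_exists_mem_orbitClosure (hT : Continuous T) {x x' : X} :
    ProximalPair T x x' ↔ ∃ q, (q, q) ∈ orbitClosure (Prod.map T T) (x, x') := by
  rw [proximalPair_iff_frequently_dist_lt]
  constructor
  · intro hfreq
    set K := orbitClosure (Prod.map T T) (x, x')
    have hK : IsCompact K := isClosed_closure.isCompact
    obtain ⟨⟨a, b⟩, habK, hab⟩ := hK.exists_isMinOn ⟨_, self_mem_orbitClosure _ (x, x')⟩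
      (continuous_fst.dist continuous_snd).continuousOn
    suffices dist a b ≤ 0 from ⟨b, by rwa [dist_le_zero.1 this] at habK⟩
    refine le_of_forall_pos_lt_add fun ε hε => ?_
    obtain ⟨n, hn⟩ := (hfreq ε hε).exists
    have hnK : (T^[n] x, T^[n] x') ∈ K := subset_closure ⟨n, by simp [Prod.map_iterate]⟩
    simpa using (hab hnK).trans_lt hn
  · rintro ⟨q, hq⟩ ε hε
    refine frequently_atTop.2 fun N => ?_
    -- `T^[N]` maps the diagonal point `(q, q)` into the orbit closure of `T^[N] (x, x')`.
    have hshift := (Function.Commute.iterate_self (Prod.map T T) N).mapsTo_orbitClosure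
      ((hT.prodMap hT).iterate N) (x, x') hq
    obtain ⟨_, hn, n, rfl⟩ := mem_closure_iff.1 hshift {p | dist p.1 p.2 < ε}
      (isOpen_lt (continuous_fst.dist continuous_snd) continuous_const) (by simpa using hε)
    refine ⟨n + N, Nat.le_add_left N n, ?_⟩
    simpa [Prod.map_iterate, iterate_add_apply] using hn

theorem IsMinimalPoint.eq_of_proximalPair (hT : Continuous T) {x x' : X}
    (hm : IsMinimalPoint (Prod.map T T) (x, x')) (hp : ProximalPair T x x') : x = x' := by
  obtain ⟨q, hq⟩ := (proximalPair_iff_exists_mem_orbitClosure hT).1 hp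
  exact hm.mem_of_mapsTo hq isClosed_diagonal mapsTo_prodMap_diagonal (mem_diagonal q)

end Proximal

theorem prod_proximal_general {X₁ Y₁ X₂ Y₂ : Type*}
    [MetricSpace X₁] [CompactSpace X₁] [MetricSpace Y₁]
    [MetricSpace X₂] [CompactSpace X₂] [MetricSpace Y₂]
    {T₁ : X₁ → X₁} {S₁ : Y₁ → Y₁} {π₁ : X₁ → Y₁}
    {T₂ : X₂ → X₂} {S₂ : Y₂ → Y₂} {π₂ : X₂ → Y₂}
    (hT₁ : Continuous T₁)
    (hπ₁ : Continuous π₁) (hcomm₁ : π₁ ∘ T₁ = S₁ ∘ π₁)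
    (hT₂ : Continuous T₂)
    (hπ₂ : Continuous π₂) (hcomm₂ : π₂ ∘ T₂ = S₂ ∘ π₂)
    (hprox₁ : ∀ x x' : X₁, π₁ x = π₁ x' → ProximalPair T₁ x x')
    (hprox₂ : ∀ x x' : X₂, π₂ x = π₂ x' → ProximalPair T₂ x x') :
    ∀ p p' : X₁ × X₂, Prod.map π₁ π₂ p = Prod.map π₁ π₂ p' →
      ProximalPair (Prod.map T₁ T₂) p p' := by
  intro p p' hpp
  have hT := hT₁.prodMap hT₂
  have hTT := hT.prodMap hT
  have hsemiconj : Semiconj (Prod.map π₁ π₂) (Prod.map T₁ T₂) (Prod.map S₁ S₂) :=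
    fun x => Prod.ext (congrFun hcomm₁ x.1) (congrFun hcomm₂ x.2)
  obtain ⟨⟨q, q'⟩, hq, hmin⟩ := exists_isMinimalPoint_mem_orbitClosure hTT (p, p')
  obtain ⟨hfibre₁, hfibre₂⟩ :=
    Prod.ext_iff.1 (hsemiconj.eq_of_mem_orbitClosure_prodMap (hπ₁.prodMap hπ₂) hpp hq)
  have hmin₁ : IsMinimalPoint (Prod.map T₁ T₁) (q.1, q'.1) :=
    hmin.map (φ := fun r => (r.1.1, r.2.1)) (by fun_prop) (fun _ => rfl) hTT
  have hmin₂ : IsMinimalPoint (Prod.map T₂ T₂) (q.2, q'.2) :=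
    hmin.map (φ := fun r => (r.1.2, r.2.2)) (by fun_prop) (fun _ => rfl) hTT
  have hq₁ := hmin₁.eq_of_proximalPair hT₁ (hprox₁ _ _ hfibre₁)
  have hq₂ := hmin₂.eq_of_proximalPair hT₂ (hprox₂ _ _ hfibre₂)
  rw [← Prod.ext hq₁ hq₂] at hq
  exact (proximalPair_iff_exists_mem_orbitClosure hT).2 ⟨q, hq⟩

/-- The product of two proximal factor maps is proximal. -/
theorem prod_proximal {X₁ Y₁ X₂ Y₂ : Type*}
    [MetricSpace X₁] [CompactSpace X₁] [MetricSpace Y₁] [CompactSpace Y₁]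
    [MetricSpace X₂] [CompactSpace X₂] [MetricSpace Y₂] [CompactSpace Y₂]
    {T₁ : X₁ → X₁} {S₁ : Y₁ → Y₁} {π₁ : X₁ → Y₁}
    {T₂ : X₂ → X₂} {S₂ : Y₂ → Y₂} {π₂ : X₂ → Y₂}
    (hT₁ : Continuous T₁) (hT₁s : Surjective T₁)
    (hS₁ : Continuous S₁) (hS₁s : Surjective S₁)
    (hπ₁ : Continuous π₁) (hπ₁s : Surjective π₁) (hcomm₁ : π₁ ∘ T₁ = S₁ ∘ π₁)
    (hT₂ : Continuous T₂) (hT₂s : Surjective T₂)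
    (hS₂ : Continuous S₂) (hS₂s : Surjective S₂)
    (hπ₂ : Continuous π₂) (hπ₂s : Surjective π₂) (hcomm₂ : π₂ ∘ T₂ = S₂ ∘ π₂)
    (hprox₁ : ∀ x x' : X₁, π₁ x = π₁ x' → ProximalPair T₁ x x')
    (hprox₂ : ∀ x x' : X₂, π₂ x = π₂ x' → ProximalPair T₂ x x') :
    ∀ p p' : X₁ × X₂, Prod.map π₁ π₂ p = Prod.map π₁ π₂ p' →
      ProximalPair (Prod.map T₁ T₂) p p' :=
  prod_proximal_general hT₁ hπ₁ hcomm₁ hT₂ hπ₂ hcomm₂ hprox₁ hprox₂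
end

section
/- Let π: (X,T) → (Y,S) be a factor map between minimal systems on compact metric spaces, with (Y,S) invertible, such that π is not almost one-to-one. Then inf_{y∈Y} diam(π⁻¹(y)) > 0. -/
open Set Function Metric

section aux

variable {X Y : Type*} [MetricSpace X] [CompactSpace X] [MetricSpace Y] [CompactSpace Y]

/-- Tube lemma for closed maps: an open set containing a fiber contains the
preimage of a neighborhood. -/
lemma exists_open_nhd_preimage_subset {π : X → Y} (hπ : Continuous π) {y : Y} {U : Set X}
    (hU : IsOpen U) (hfib : π ⁻¹' {y} ⊆ U) :
    ∃ V : Set Y, IsOpen V ∧ y ∈ V ∧ π ⁻¹' V ⊆ U := by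
  refine ⟨(π '' Uᶜ)ᶜ, (hπ.isClosedMap _ hU.isClosed_compl).isOpen_compl, ?_, ?_⟩
  · intro h
    obtain ⟨x, hx, hxy⟩ := h
    exact hx (hfib (by simp [hxy]))
  · intro x hx
    by_contra hxU
    exact hx ⟨x, hxU, rfl⟩

/-- The set of points with small fiber diameter is open (upper semicontinuity). -/
lemma isOpen_small_diam {π : X → Y} (hπ : Continuous π) (c : ℝ) :
    IsOpen {y : Y | diam (π ⁻¹' {y}) < c} := by
  rw [isOpen_iff_forall_mem_open]
  intro y hy
  simp only [mem_setOf_eq] at hy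
  set d := diam (π ⁻¹' {y}) with hd
  set ε := (c - d) / 3 with hε
  have hεpos : 0 < ε := by
    have := diam_nonneg (s := π ⁻¹' {y})
    simp only [hε]
    linarith
  obtain ⟨V, hVopen, hyV, hVsub⟩ := exists_open_nhd_preimage_subset hπ
    (isOpen_thickening (δ := ε) (E := π ⁻¹' {y})) (self_subset_thickening hεpos _)
  refine ⟨V, ?_, hVopen, hyV⟩
  intro y' hy'
  simp only [mem_setOf_eq]
  have hdle : diam (π ⁻¹' {y'}) ≤ d + 2 * ε := by
    apply diam_le_of_forall_dist_le (by positivity)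
    intro a ha b hb
    have hpa : π a = y' := ha
    have hpb : π b = y' := hb
    have haU : a ∈ thickening ε (π ⁻¹' {y}) := hVsub (by simp [Set.mem_preimage, hpa, hy'])
    have hbU : b ∈ thickening ε (π ⁻¹' {y}) := hVsub (by simp [Set.mem_preimage, hpb, hy'])
    obtain ⟨za, hza, hdza⟩ := mem_thickening_iff.1 haU
    obtain ⟨zb, hzb, hdzb⟩ := mem_thickening_iff.1 hbU
    have hzz : dist za zb ≤ d := dist_le_diam_of_mem isBounded_of_compactSpace hza hzb
    calc dist a b ≤ dist a za + dist za zb + dist zb b := dist_triangle4 a za zb b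
      _ ≤ ε + d + ε := by
          have := dist_comm zb b
          nlinarith [hdza, hdzb, hzz, dist_comm zb b ▸ hdzb]
      _ ≤ d + 2 * ε := by linarith
  have : d + 2 * ε < c := by simp only [hε]; linarith
  linarith

end aux

/-- For a not almost one-to-one factor map between minimal systems with invertible base,
the fiber diameters are uniformly bounded below. -/
theorem fiber_diam_bounded_below {X Y : Type*}
    [MetricSpace X] [CompactSpace X] [MetricSpace Y] [CompactSpace Y]
    {T : X → X} {S : Y → Y} {π : X → Y}
    (hT : Continuous T) (hTs : Surjective T)
    (hS : Continuous S) (hSbij : Bijective S)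
    (hπ : Continuous π) (hπs : Surjective π) (hcomm : π ∘ T = S ∘ π)
    (hXmin : ∀ x : X, Dense (Set.range fun n : ℕ => T^[n] x))
    (hYmin : ∀ y : Y, Dense (Set.range fun n : ℕ => S^[n] y))
    (hnot : ¬ Dense {y : Y | ∃ x : X, π ⁻¹' {y} = {x}}) :
    ∃ c > (0 : ℝ), ∀ y : Y, c ≤ Metric.diam (π ⁻¹' {y}) := by
  classical
  rcases isEmpty_or_nonempty Y with hY | hY
  · exact ⟨1, one_pos, fun y => (IsEmpty.false y).elim⟩
  -- semiconjugacy for iterates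
  have sc : Function.Semiconj π T S := fun x => congrFun hcomm x
  have fiber_eq : ∀ (n : ℕ) (y : Y), π ⁻¹' {S^[n] y} = T^[n] '' (π ⁻¹' {y}) := by
    intro n y
    ext x'
    constructor
    · intro hx'
      simp only [Set.mem_preimage, Set.mem_singleton_iff] at hx'
      obtain ⟨x, rfl⟩ := (hTs.iterate n) x'
      have : S^[n] (π x) = S^[n] y := by rw [← (sc.iterate_right n) x, hx']
      have hxy : π x = y := (hSbij.injective.iterate n) this
      exact ⟨x, by simp [hxy], rfl⟩
    · rintro ⟨x, hx, rfl⟩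
      simp only [Set.mem_preimage, Set.mem_singleton_iff] at hx ⊢
      rw [(sc.iterate_right n) x, hx]
  -- no fiber is a singleton
  have hnosing : ∀ y : Y, ¬ ∃ x : X, π ⁻¹' {y} = {x} := by
    intro y1 ⟨x1, hx1⟩
    apply hnot
    apply Dense.mono _ (hYmin y1)
    rintro _ ⟨n, rfl⟩
    exact ⟨T^[n] x1, by rw [fiber_eq n y1, hx1, Set.image_singleton]⟩
  -- every fiber has positive diameter
  have hpos : ∀ y : Y, 0 < diam (π ⁻¹' {y}) := by
    intro y
    obtain ⟨x1, hx1⟩ := hπs y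
    have hx1' : x1 ∈ π ⁻¹' {y} := by simp [hx1]
    obtain ⟨x2, hx2, hne⟩ : ∃ x2 ∈ π ⁻¹' {y}, x2 ≠ x1 := by
      by_contra h
      push_neg at h
      exact hnosing y ⟨x1, Set.eq_singleton_iff_unique_mem.2 ⟨hx1', h⟩⟩
    have := dist_le_diam_of_mem (isBounded_of_compactSpace) hx2 hx1'
    have := dist_pos.2 hne
    linarith
  -- Baire: some closed set {diam ≥ 1/(m+1)} has nonempty interior
  have hclosed : ∀ m : ℕ, IsClosed {y : Y | 1 / (m + 1 : ℝ) ≤ diam (π ⁻¹' {y})} := by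
    intro m
    have := (isOpen_small_diam hπ (1 / (m + 1 : ℝ))).isClosed_compl
    convert this using 1
    ext y
    simp [not_lt]
  have hcover : (⋃ m : ℕ, {y : Y | 1 / (m + 1 : ℝ) ≤ diam (π ⁻¹' {y})}) = univ := by
    ext y
    simp only [Set.mem_iUnion, Set.mem_setOf_eq, Set.mem_univ, iff_true]
    obtain ⟨n, hn⟩ := exists_nat_one_div_lt (hpos y)
    exact ⟨n, hn.le⟩
  obtain ⟨m, hm⟩ := nonempty_interior_of_iUnion_of_closed hclosed hcover
  set c' : ℝ := 1 / (m + 1 : ℝ) with hc'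
  have hc'pos : 0 < c' := by positivity
  set U := interior {y : Y | c' ≤ diam (π ⁻¹' {y})} with hU
  have hUopen : IsOpen U := isOpen_interior
  have hUdiam : ∀ y ∈ U, c' ≤ diam (π ⁻¹' {y}) := fun y hy => by
    have : y ∈ {y : Y | c' ≤ diam (π ⁻¹' {y})} :=
      interior_subset (s := {y : Y | c' ≤ diam (π ⁻¹' {y})}) hy
    exact this
  -- cover Y with preimages of U under iterates of S
  have hScont : ∀ n : ℕ, Continuous S^[n] := fun n => hS.iterate n
  have hcov : (univ : Set Y) ⊆ ⋃ n : ℕ, S^[n] ⁻¹' U := by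
    intro y _
    obtain ⟨z, hz, hmem⟩ := (hYmin y).exists_mem_open hUopen hm
    obtain ⟨n, rfl⟩ := hz
    exact Set.mem_iUnion.2 ⟨n, hmem⟩
  obtain ⟨t, ht⟩ := isCompact_univ.elim_finite_subcover (fun n : ℕ => S^[n] ⁻¹' U)
    (fun n => (hScont n).isOpen_preimage _ hUopen) hcov
  -- uniform continuity of iterates of T
  have hTucont : ∀ n : ℕ, ∃ δ > 0, ∀ a b : X, dist a b < δ → dist (T^[n] a) (T^[n] b) < c' / 2 := by
    intro n
    have : UniformContinuous T^[n] := CompactSpace.uniformContinuous_of_continuous (hT.iterate n)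
    exact Metric.uniformContinuous_iff.1 this (c' / 2) (by positivity)
  choose δf hδfpos hδf using hTucont
  set t' : Finset ℕ := insert 0 t with ht'
  have ht'ne : t'.Nonempty := ⟨0, Finset.mem_insert_self 0 t⟩
  set δ : ℝ := t'.inf' ht'ne δf with hδ
  have hδpos : 0 < δ := (Finset.lt_inf'_iff ht'ne).2 fun n _ => hδfpos n
  refine ⟨δ, hδpos, fun y => ?_⟩
  by_contra hlt
  push_neg at hlt
  obtain ⟨n, hnt, hnU⟩ : ∃ n ∈ t, S^[n] y ∈ U := by
    have := ht (Set.mem_univ y)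
    simpa using this
  have hdle : diam (π ⁻¹' {S^[n] y}) ≤ c' / 2 := by
    rw [fiber_eq n y]
    apply diam_le_of_forall_dist_le (by positivity)
    rintro _ ⟨a, ha, rfl⟩ _ ⟨b, hb, rfl⟩
    have hab : dist a b < δ :=
      lt_of_le_of_lt (dist_le_diam_of_mem isBounded_of_compactSpace ha hb) hlt
    have hδle : δ ≤ δf n := Finset.inf'_le δf (Finset.mem_insert_of_mem hnt)
    exact (hδf n a b (lt_of_lt_of_le hab hδle)).le
  have := hUdiam _ hnU
  linarith
end

section
/- Let π: (X,T) → (Y,S) be a factor map of compact metric dynamical systems, and let y₀ ∈ Eq(Y,S) be a minimal point whose fiber π⁻¹(y₀) = {x₀} is a singleton. Then x₀ is a syndetically equicontinuous point of (X,T); in particular (X,T) is not thickly sensitive. -/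
open Set Metric Function

lemma syndetic_mono' {A B : Set ℕ} (h : A ⊆ B) (hA : Syndetic A) : Syndetic B := by
  obtain ⟨m, hm⟩ := hA
  exact ⟨m, fun n => (hm n).imp fun i hi => ⟨hi.1, h hi.2⟩⟩

lemma thick_inter_syndetic' {A B : Set ℕ} (hA : Thick A) (hB : Syndetic B) :
    (A ∩ B).Nonempty := by
  obtain ⟨m, hm⟩ := hB
  obtain ⟨n, hn⟩ := hA m
  obtain ⟨i, hi, hiB⟩ := hm n
  exact ⟨n + i, hn i hi, hiB⟩

/-- If `y₀` is an equicontinuity point and a minimal point of the base whose fiber is the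
singleton `{x₀}`, then `x₀` is syndetically equicontinuous; in particular the extension
is not thickly sensitive. -/
theorem syndEqPt_of_singleton_fiber {X Y : Type*}
    [MetricSpace X] [CompactSpace X] [MetricSpace Y] [CompactSpace Y]
    {T : X → X} {S : Y → Y} {π : X → Y}
    (hT : Continuous T) (hTs : Surjective T)
    (hS : Continuous S) (hSs : Surjective S)
    (hπ : Continuous π) (hπs : Surjective π) (hcomm : π ∘ T = S ∘ π)
    {y₀ : Y} {x₀ : X} (hfiber : π ⁻¹' {y₀} = {x₀})
    (heq : ∀ ε > (0 : ℝ), ∃ δ > (0 : ℝ), ∀ y : Y, dist y y₀ < δ →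
      ∀ n : ℕ, dist (S^[n] y) (S^[n] y₀) < ε)
    (hmin : ∀ V : Set Y, IsOpen V → y₀ ∈ V → Syndetic {n : ℕ | S^[n] y₀ ∈ V}) :
    SyndEqPt T x₀ ∧ ¬ ThicklySensitive T := by
  have hπx₀ : π x₀ = y₀ := by
    have : x₀ ∈ π ⁻¹' {y₀} := by rw [hfiber]; rfl
    exact this
  have hsc : Function.Semiconj π T S := fun x => congrFun hcomm x
  have hfib : ∀ ε > (0:ℝ), ∃ η > (0:ℝ), ∀ x : X, dist (π x) y₀ < η → dist x x₀ < ε := by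
    intro ε hε
    by_cases hK : {x : X | ε ≤ dist x x₀}.Nonempty
    · have hKc : IsCompact {x : X | ε ≤ dist x x₀} :=
        (isClosed_le continuous_const (continuous_id.dist continuous_const)).isCompact
      have hcont : ContinuousOn (fun x : X => dist (π x) y₀) {x : X | ε ≤ dist x x₀} :=
        (hπ.dist continuous_const).continuousOn
      obtain ⟨x', hx'K, hmin'⟩ := hKc.exists_isMinOn hK hcont
      refine ⟨dist (π x') y₀, ?_, ?_⟩
      · rcases eq_or_lt_of_le (dist_nonneg : (0:ℝ) ≤ dist (π x') y₀) with h0 | h0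
        · exfalso
          have : π x' = y₀ := by rwa [eq_comm, dist_eq_zero] at h0
          have : x' ∈ π ⁻¹' {y₀} := this
          rw [hfiber] at this
          have hx0 : x' = x₀ := this
          have : ε ≤ dist x₀ x₀ := hx0 ▸ hx'K
          simp at this; linarith
        · exact h0
      · intro x hx
        by_contra hcon
        push_neg at hcon
        have : x ∈ {x : X | ε ≤ dist x x₀} := hcon
        have := hmin' this
        simp only [Set.mem_setOf_eq] at this
        linarith
    · refine ⟨1, one_pos, fun x _ => ?_⟩
      by_contra hcon
      exact hK ⟨x, not_lt.mp hcon⟩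
  have hsynd : SyndEqPt T x₀ := by
    intro ε hε
    obtain ⟨η, hη, hηfib⟩ := hfib (ε/2) (by linarith)
    obtain ⟨δ, hδ, hδeq⟩ := heq (η/2) (by linarith)
    refine ⟨π ⁻¹' (ball y₀ δ), isOpen_ball.preimage hπ, ?_, ?_⟩
    · simp only [mem_preimage, mem_ball, hπx₀, dist_self]
      exact hδ
    · apply syndetic_mono' (A := {n | S^[n] y₀ ∈ ball y₀ (η/2)})
      · intro n hn x₁ hx₁ x₂ hx₂
        have key : ∀ x ∈ π ⁻¹' (ball y₀ δ), dist (T^[n] x) x₀ < ε/2 := by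
          intro x hx
          apply hηfib
          rw [(hsc.iterate_right n).eq x]
          calc dist (S^[n] (π x)) y₀
              ≤ dist (S^[n] (π x)) (S^[n] y₀) + dist (S^[n] y₀) y₀ := dist_triangle _ _ _
            _ < η/2 + η/2 := add_lt_add (hδeq _ hx n) hn
            _ = η := by ring
        calc dist (T^[n] x₁) (T^[n] x₂)
            ≤ dist (T^[n] x₁) x₀ + dist x₀ (T^[n] x₂) := dist_triangle _ _ _
          _ ≤ ε := by
              have h1 := key x₁ hx₁
              have h2 := key x₂ hx₂
              rw [dist_comm x₀]
              linarith
      · exact hmin _ isOpen_ball (mem_ball_self (by linarith))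
  refine ⟨hsynd, ?_⟩
  rintro ⟨δ, hδ, hsens⟩
  obtain ⟨U, hUopen, hx₀U, hUs⟩ := hsynd δ hδ
  obtain ⟨n, hnS, hnE⟩ := thick_inter_syndetic' (hsens U hUopen ⟨x₀, hx₀U⟩) hUs
  obtain ⟨x₁, hx₁, x₂, hx₂, hgt⟩ := hnS
  exact absurd (hnE x₁ hx₁ x₂ hx₂) (not_le.mpr hgt)
end

section
/- If (X,T) is an almost one-to-one extension of a minimal equicontinuous system, then (X,T) is syndetically equicontinuous, i.e., every point of X is syndetically equicontinuous. -/
open Set Metric Function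

/-- An almost one-to-one extension of a minimal equicontinuous system is
syndetically equicontinuous at every point. -/
theorem syndeticallyEquicontinuous_of_almostOneToOne {X Y : Type*}
    [MetricSpace X] [CompactSpace X] [MetricSpace Y] [CompactSpace Y]
    {T : X → X} {S : Y → Y} {π : X → Y}
    (hT : Continuous T) (hTs : Surjective T)
    (hS : Continuous S) (hSs : Surjective S)
    (hπ : Continuous π) (hπs : Surjective π) (hcomm : π ∘ T = S ∘ π)
    (hYmin : ∀ y : Y, Dense (Set.range fun n : ℕ => S^[n] y))
    (hYeq : ∀ y : Y, ∀ ε > (0 : ℝ), ∃ δ > (0 : ℝ), ∀ y' : Y, dist y' y < δ →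
      ∀ n : ℕ, dist (S^[n] y') (S^[n] y) < ε)
    (hone : Dense {y : Y | ∃ x : X, π ⁻¹' {y} = {x}}) :
    ∀ x : X, SyndEqPt T x := by
  intro x ε hε
  have hNY : Nonempty Y := ⟨π x⟩
  obtain ⟨y₀, x₀, hfib⟩ := hone.nonempty
  -- semiconjugacy for iterates
  have hcomm' : ∀ (n : ℕ) (z : X), π (T^[n] z) = S^[n] (π z) := by
    intro n
    induction n with
    | zero => intro z; simp
    | succ n ih =>
      intro z
      rw [Function.iterate_succ_apply, Function.iterate_succ_apply, ih (T z)]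
      congr 1
      exact congrFun hcomm z
  -- shrink the fiber: points mapping near y₀ are near x₀
  obtain ⟨η, hη, hηsub⟩ : ∃ η > (0 : ℝ), ∀ z : X, dist (π z) y₀ < η → dist z x₀ < ε / 2 := by
    set C : Set X := {z : X | ε / 2 ≤ dist z x₀} with hC
    have hCclosed : IsClosed C :=
      isClosed_le continuous_const (continuous_id.dist continuous_const)
    have himg : IsCompact (π '' C) := hCclosed.isCompact.image hπ
    have hy₀ : y₀ ∉ π '' C := by
      rintro ⟨z, hz, hπz⟩
      have hzx : z ∈ π ⁻¹' {y₀} := by simp [hπz]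
      rw [hfib] at hzx
      have hz' : z = x₀ := hzx
      rw [hz'] at hz
      simp only [hC, Set.mem_setOf_eq, dist_self] at hz
      linarith
    have hopen : IsOpen (π '' C)ᶜ := himg.isClosed.isOpen_compl
    obtain ⟨η, hη, hball⟩ := Metric.isOpen_iff.mp hopen y₀ hy₀
    refine ⟨η, hη, fun z hz => ?_⟩
    by_contra h
    push_neg at h
    exact hball (by simpa [Metric.mem_ball] using hz) ⟨z, h, rfl⟩
  -- equicontinuity at π x
  obtain ⟨δ, hδ, hδeq⟩ := hYeq (π x) (η / 2) (by linarith)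
  -- return times of π x to the ball around y₀ are syndetic
  have hsynd : Syndetic {n : ℕ | S^[n] (π x) ∈ Metric.ball y₀ (η / 2)} := by
    have hVo : IsOpen (Metric.ball y₀ (η / 2)) := Metric.isOpen_ball
    have hVne : (Metric.ball y₀ (η / 2)).Nonempty :=
      ⟨y₀, by simp [Metric.mem_ball]; linarith⟩
    have hcover : (Set.univ : Set Y) ⊆ ⋃ k : ℕ, S^[k] ⁻¹' Metric.ball y₀ (η / 2) := by
      intro y' _
      obtain ⟨a, ⟨k, hk⟩, ha⟩ := (hYmin y').exists_mem_open hVo hVne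
      have hk' : S^[k] y' = a := hk
      exact Set.mem_iUnion.mpr ⟨k, by simp only [Set.mem_preimage]; rw [hk']; exact ha⟩
    obtain ⟨t, ht⟩ := isCompact_univ.elim_finite_subcover _
      (fun k : ℕ => hVo.preimage (hS.iterate k)) hcover
    refine ⟨t.sup id, fun n => ?_⟩
    obtain ⟨k, hk, hmem⟩ := Set.mem_iUnion₂.mp (ht (Set.mem_univ (S^[n] (π x))))
    refine ⟨k, Finset.le_sup (f := id) hk, ?_⟩
    simp only [Set.mem_setOf_eq]
    rw [Nat.add_comm, Function.iterate_add_apply]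
    exact hmem
  obtain ⟨m, hm⟩ := hsynd
  refine ⟨π ⁻¹' Metric.ball (π x) δ, Metric.isOpen_ball.preimage hπ,
    by simp [Metric.mem_ball, hδ], m, fun n => ?_⟩
  obtain ⟨i, him, hni⟩ := hm n
  refine ⟨i, him, ?_⟩
  intro x₁ hx₁ x₂ hx₂
  have key : ∀ z : X, z ∈ π ⁻¹' Metric.ball (π x) δ → dist (T^[n + i] z) x₀ < ε / 2 := by
    intro z hz
    have h1 : dist (S^[n + i] (π z)) (S^[n + i] (π x)) < η / 2 :=
      hδeq (π z) (by simpa [Metric.mem_ball] using hz) (n + i)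
    have h2 : dist (S^[n + i] (π x)) y₀ < η / 2 := by
      simpa [Metric.mem_ball] using hni
    have h3 : dist (π (T^[n + i] z)) y₀ < η := by
      rw [hcomm']
      calc dist (S^[n + i] (π z)) y₀
          ≤ dist (S^[n + i] (π z)) (S^[n + i] (π x)) + dist (S^[n + i] (π x)) y₀ :=
            dist_triangle _ _ _
        _ < η := by linarith
    exact hηsub _ h3
  have htri := dist_triangle (T^[n + i] x₁) x₀ (T^[n + i] x₂)
  have d1 := key x₁ hx₁
  have d2 := key x₂ hx₂
  rw [dist_comm] at d2
  linarith
end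

section
/- Let (X,T) be a minimal compact metric dynamical system and x, y ∈ X. If for every pair of open sets U ∋ x and V ∋ y there exist n, m ∈ ℕ with Tⁿx ∈ U, Tⁿ⁺ᵐx ∈ U and Tᵐx ∈ V, then (x,y) belongs to the regionally proximal relation Q₊(X,T). -/
open Set Function Metric

/-- The regionally proximal relation. -/
def RegProx {X : Type*} [MetricSpace X] (T : X → X) (x y : X) : Prop :=
  ∀ ε > (0 : ℝ), ∃ x' y' : X, ∃ n : ℕ, 0 < n ∧
    dist x x' < ε ∧ dist y y' < ε ∧ dist (T^[n] x') (T^[n] y') < ε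

/-- Veech-type sufficient condition for regional proximality in a minimal system. -/
theorem regProx_of_return_condition {X : Type*} [MetricSpace X] [CompactSpace X]
    {T : X → X} (hT : Continuous T) (hTs : Surjective T)
    (hmin : ∀ z : X, Dense (Set.range fun n : ℕ => T^[n] z))
    (x y : X)
    (h : ∀ U V : Set X, IsOpen U → x ∈ U → IsOpen V → y ∈ V →
      ∃ n m : ℕ, 0 < n ∧ 0 < m ∧ T^[n] x ∈ U ∧ T^[n + m] x ∈ U ∧ T^[m] x ∈ V) :
    RegProx T x y := by
  intro ε hε
  obtain ⟨n, m, hn, hm, h1, h2, h3⟩ := h (ball x (ε/2)) (ball y ε) isOpen_ball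
    (mem_ball_self (by linarith)) isOpen_ball (mem_ball_self hε)
  refine ⟨x, T^[m] x, n, hn, by simpa using hε, by simpa [dist_comm] using h3, ?_⟩
  rw [← Function.iterate_add_apply]
  calc dist (T^[n] x) (T^[n + m] x)
      ≤ dist (T^[n] x) x + dist x (T^[n + m] x) := dist_triangle _ _ _
    _ < ε/2 + ε/2 := by
        gcongr
        · simpa [dist_comm] using h1
        · simpa [dist_comm] using h2
    _ = ε := by ring
end

section
/- Let (X,T) be a minimal compact metric dynamical system and x, y ∈ X. If N_T(x,U) contains a Δ-set for every open set U containing y, then (x,y) ∈ Q₊(X,T). -/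
open Set Function Metric

/-- A Δ-set: the set of differences of a strictly increasing sequence of naturals. -/
def IsDeltaSet (A : Set ℕ) : Prop :=
  ∃ s : ℕ → ℕ, StrictMono s ∧ A = {d : ℕ | ∃ i j : ℕ, j < i ∧ d = s i - s j}

/-- If every return-time set `N_T(x, U)`, for `U` an open neighbourhood of `y`,
contains a Δ-set, then `(x, y)` is regionally proximal. -/
theorem regProx_of_delta_in_returnTimes {X : Type*} [MetricSpace X] [CompactSpace X]
    {T : X → X} (hT : Continuous T) (hTs : Surjective T)
    (hmin : ∀ z : X, Dense (Set.range fun n : ℕ => T^[n] z))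
    (x y : X)
    (h : ∀ U : Set X, IsOpen U → y ∈ U →
      ∃ A : Set ℕ, IsDeltaSet A ∧ A ⊆ {n : ℕ | T^[n] x ∈ U}) :
    RegProx T x y := by
  intro ε hε
  obtain ⟨A, ⟨s, hs, hA⟩, hsub⟩ := h (ball y (ε/2)) isOpen_ball (mem_ball_self (by linarith))
  have h01 : s 0 ≤ s 1 := (hs (by norm_num)).le
  have h12 : s 1 ≤ s 2 := (hs (by norm_num)).le
  have mem : ∀ i j : ℕ, j < i → T^[s i - s j] x ∈ ball y (ε/2) := by
    intro i j hij
    apply hsub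
    rw [hA]
    exact ⟨i, j, hij, rfl⟩
  refine ⟨x, T^[s 1 - s 0] x, s 2 - s 1, Nat.sub_pos_of_lt (hs one_lt_two), by simpa using hε, ?_, ?_⟩
  · have := mem 1 0 (by norm_num)
    rw [mem_ball] at this
    rw [dist_comm]; linarith
  · have h1 : T^[s 2 - s 1] (T^[s 1 - s 0] x) = T^[s 2 - s 0] x := by
      rw [← Function.iterate_add_apply]
      congr 1
      omega
    rw [h1]
    have ha := mem 2 1 (by norm_num)
    have hb := mem 2 0 (by norm_num)
    rw [mem_ball] at ha hb
    calc dist (T^[s 2 - s 1] x) (T^[s 2 - s 0] x)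
        ≤ dist (T^[s 2 - s 1] x) y + dist y (T^[s 2 - s 0] x) := dist_triangle _ _ _
      _ < ε := by rw [dist_comm y] at *; linarith
end

section
/- The natural extension (X̂, T̂) of a compact metric dynamical system (X,T) is sensitive if and only if (X,T) is sensitive. -/
open Set Function Metric

/-- Sensitivity of a map `F` on a topological space, with respect to a distance
function `d` (which is assumed compatible with the topology). -/
def SensitiveWith {Z : Type*} [TopologicalSpace Z] (d : Z → Z → ℝ) (F : Z → Z) : Prop :=
  ∃ δ > (0 : ℝ), ∀ U : Set Z, IsOpen U → U.Nonempty →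
    ∃ u ∈ U, ∃ v ∈ U, ∃ n : ℕ, δ < d (F^[n] u) (F^[n] v)

/-- The natural extension of `(X, T)`. -/
def NatExt {X : Type*} [MetricSpace X] (T : X → X) : Type _ :=
  {f : ℕ → X // ∀ i : ℕ, T (f (i + 1)) = f i}

instance {X : Type*} [MetricSpace X] (T : X → X) : TopologicalSpace (NatExt T) :=
  instTopologicalSpaceSubtype

/-- The shift map on the natural extension. -/
def natExtMap {X : Type*} [MetricSpace X] (T : X → X) (f : NatExt T) : NatExt T :=
  ⟨fun n => Nat.rec (T (f.1 0)) (fun i _ => f.1 i) n, by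
    intro i
    cases i with
    | zero => rfl
    | succ n => exact f.2 n⟩

/-- The metric on the natural extension from the paper. -/
noncomputable def natExtDist {X : Type*} [MetricSpace X] (T : X → X)
    (f g : NatExt T) : ℝ :=
  ∑' n : ℕ, dist (f.1 n) (g.1 n) / (2 ^ (n + 1) * (Metric.diam (Set.univ : Set X) + 1))


/-!
The shift `T̂` acts coordinatewise as `T`, so `T̂ⁿ (xₖ)ₖ = (Tⁿ xₖ)ₖ`, whose `k`-th coordinate is
`Tⁿ⁻ᵏ x₀` for `k ≤ n` and `x_{k-n}` for `k ≥ n`.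

If `T` is sensitive: a nonempty open set of `X̂` contains every point whose `N`-th coordinate
lies in some nonempty open `W ⊆ X`. Since finitely many iterates of `T` are equicontinuous, two
points of `W` are separated by `Tⁿ` for some `n > N`; lifting them to `X̂` with `N`-th coordinate
fixed, their images under `T̂ⁿ⁻ᴺ` are separated in the zeroth coordinate.

If `T̂` is sensitive: given `U ⊆ X`, apply it to the points of `X̂` with zeroth coordinate in `U`
and first `m` coordinates close to a fixed lift, with `2⁻ᵐ` small. If the `T`-orbits of their
zeroth coordinates stayed close, so would the coordinates `k ≤ n + m` of their `T̂ⁿ`-images,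
and the weights `2⁻ᵏ⁻¹` make the remaining coordinates negligible.
-/

def SensitiveWithConst {Z : Type*} [TopologicalSpace Z] (d : Z → Z → ℝ) (F : Z → Z) (δ : ℝ) :
    Prop :=
  ∀ U : Set Z, IsOpen U → U.Nonempty → ∃ u ∈ U, ∃ v ∈ U, ∃ n : ℕ, δ < d (F^[n] u) (F^[n] v)

theorem SensitiveWithConst.exists_gt {X : Type*} [PseudoMetricSpace X] {T : X → X}
    (hT : Continuous T) {δ : ℝ} (hδ : 0 < δ) (h : SensitiveWithConst dist T δ) {U : Set X}
    (hU : IsOpen U) (hne : U.Nonempty) (N : ℕ) :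
    ∃ u ∈ U, ∃ v ∈ U, ∃ n, N < n ∧ δ < dist (T^[n] u) (T^[n] v) := by
  obtain ⟨x, hx⟩ := hne
  -- on this smaller set the first `N + 1` iterates move points less than `δ` apart
  set V := U ∩ ⋂ i ∈ Iic N, T^[i] ⁻¹' ball (T^[i] x) (δ / 2)
  have hV : IsOpen V := hU.inter <| (finite_Iic N).isOpen_biInter fun i _ ↦
    isOpen_ball.preimage (hT.iterate i)
  have hxV : x ∈ V := ⟨hx, mem_iInter₂.2 fun i _ ↦ mem_ball_self (half_pos hδ)⟩
  obtain ⟨u, ⟨hu, hu'⟩, v, ⟨hv, hv'⟩, n, hn⟩ := h V hV ⟨x, hxV⟩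
  refine ⟨u, hu, v, hv, n, lt_of_not_ge fun hnN ↦ hn.not_ge ?_, hn⟩
  have hun := mem_iInter₂.1 hu' n hnN
  have hvn := mem_iInter₂.1 hv' n hnN
  rw [mem_preimage, mem_ball] at hun hvn
  linarith [dist_triangle_right (T^[n] u) (T^[n] v) (T^[n] x)]

namespace NatExt

variable {X : Type*} [MetricSpace X] {T : X → X}

theorem iterate_apply_add (f : NatExt T) (i m : ℕ) : T^[m] (f.1 (i + m)) = f.1 i := by
  induction m with
  | zero => rfl
  | succ m ih => rw [iterate_succ_apply, ← add_assoc, f.2, ih]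

theorem iterate_apply_self (f : NatExt T) (n : ℕ) : T^[n] (f.1 n) = f.1 0 := by
  simpa using iterate_apply_add f 0 n

theorem natExtMap_apply (f : NatExt T) (k : ℕ) : (natExtMap T f).1 k = T (f.1 k) := by
  cases k with
  | zero => rfl
  | succ k => exact (f.2 k).symm

theorem iterate_natExtMap_apply (n : ℕ) (f : NatExt T) (k : ℕ) :
    ((natExtMap T)^[n] f).1 k = T^[n] (f.1 k) := by
  induction n generalizing f with
  | zero => rfl
  | succ n ih => rw [iterate_succ_apply, ih, natExtMap_apply, iterate_succ_apply]

theorem iterate_natExtMap_apply_of_le {n k : ℕ} (f : NatExt T) (hk : k ≤ n) :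
    ((natExtMap T)^[n] f).1 k = T^[n - k] (f.1 0) := by
  obtain ⟨j, rfl⟩ := Nat.exists_eq_add_of_le hk
  rw [iterate_natExtMap_apply, Nat.add_sub_cancel_left, add_comm, iterate_add_apply,
    iterate_apply_self]

theorem iterate_natExtMap_apply_of_ge {n k : ℕ} (f : NatExt T) (hk : n ≤ k) :
    ((natExtMap T)^[n] f).1 k = f.1 (k - n) := by
  obtain ⟨j, rfl⟩ := Nat.exists_eq_add_of_le hk
  rw [iterate_natExtMap_apply, add_comm, Nat.add_sub_cancel, iterate_apply_add]

theorem exists_apply_eq (hTs : Surjective T) (x : X) (N : ℕ) : ∃ f : NatExt T, f.1 N = x := by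
  let b : NatExt T := ⟨fun i ↦ (surjInv hTs)^[i] x, fun i ↦ by
    show T ((surjInv hTs)^[i + 1] x) = _
    rw [iterate_succ_apply', surjInv_eq hTs]⟩
  exact ⟨(natExtMap T)^[N] b, by rw [iterate_natExtMap_apply, iterate_apply_self]; rfl⟩

theorem continuous_apply (k : ℕ) : Continuous fun f : NatExt T ↦ f.1 k :=
  (_root_.continuous_apply k).comp continuous_subtype_val

theorem exists_isOpen_preimage_subset (hT : Continuous T) {U : Set (NatExt T)} (hU : IsOpen U)
    (hne : U.Nonempty) :
    ∃ N, ∃ W : Set X, IsOpen W ∧ W.Nonempty ∧ (fun f : NatExt T ↦ f.1 N) ⁻¹' W ⊆ U := by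
  obtain ⟨f, hf⟩ := hne
  obtain ⟨V, hV, rfl⟩ := isOpen_induced_iff.1 hU
  obtain ⟨I, u, hu, hIu⟩ := isOpen_pi_iff.1 hV f.1 hf
  obtain ⟨N, hN⟩ : ∃ N, ∀ a ∈ I, a ≤ N := ⟨I.sup id, fun a ha ↦ Finset.le_sup (f := id) ha⟩
  have hcoord (g : NatExt T) {a : ℕ} (ha : a ∈ I) : T^[N - a] (g.1 N) = g.1 a := by
    obtain ⟨j, hj⟩ := Nat.exists_eq_add_of_le (hN a ha)
    rw [hj, Nat.add_sub_cancel_left, iterate_apply_add]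
  refine ⟨N, ⋂ a ∈ I, T^[N - a] ⁻¹' u a, ?_, ⟨f.1 N, ?_⟩, fun g hg ↦ hIu fun a ha ↦ ?_⟩
  · exact isOpen_biInter_finset fun a ha ↦ (hu a ha).1.preimage (hT.iterate _)
  · exact mem_iInter₂.2 fun a ha ↦ by rw [mem_preimage, hcoord f ha]; exact (hu a ha).2
  · have := mem_iInter₂.1 hg a ha
    rwa [mem_preimage, hcoord g ha] at this

section Bounded

variable [BoundedSpace X]

theorem dist_div_le_half_pow (f g : NatExt T) (k : ℕ) :
    dist (f.1 k) (g.1 k) / (2 ^ (k + 1) * (diam (univ : Set X) + 1)) ≤ (1 / 2) ^ (k + 1) := by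
  have hdiam := dist_le_diam_of_mem (Bornology.IsBounded.all univ) (mem_univ (f.1 k))
    (mem_univ (g.1 k))
  have hM : 0 < diam (univ : Set X) + 1 := by linarith [diam_nonneg (s := (univ : Set X))]
  rw [div_le_iff₀ (by positivity), one_div_pow, div_mul_eq_mul_div, one_mul,
    mul_div_cancel_left₀ _ (by positivity)]
  linarith

theorem summable_dist_div (f g : NatExt T) :
    Summable fun k ↦ dist (f.1 k) (g.1 k) / (2 ^ (k + 1) * (diam (univ : Set X) + 1)) :=
  Summable.of_nonneg_of_le (fun _ ↦ by positivity) (dist_div_le_half_pow f g)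
    ((summable_nat_add_iff 1).2 summable_geometric_two)

theorem dist_div_le_natExtDist (f g : NatExt T) (k : ℕ) :
    dist (f.1 k) (g.1 k) / (2 ^ (k + 1) * (diam (univ : Set X) + 1)) ≤ natExtDist T f g :=
  (summable_dist_div f g).le_tsum k fun _ _ ↦ by positivity

theorem natExtDist_le_of_forall_dist_le (f g : NatExt T) (m : ℕ) {c : ℝ}
    (h : ∀ k ≤ m, dist (f.1 k) (g.1 k) ≤ c) :
    natExtDist T f g ≤ c / (diam (univ : Set X) + 1) + (1 / 2) ^ (m + 1) := by
  set M := diam (univ : Set X) + 1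
  have hc : 0 ≤ c := dist_nonneg.trans (h 0 m.zero_le)
  have hgeom : HasSum (fun k : ℕ ↦ (1 / 2 : ℝ) ^ (k + 1)) 1 := by
    simpa [pow_succ] using hasSum_geometric_two.mul_right (1 / 2 : ℝ)
  rw [natExtDist, ← (summable_dist_div f g).sum_add_tsum_nat_add (m + 1)]
  gcongr ?_ + ?_
  · calc _ ≤ ∑ k ∈ Finset.range (m + 1), c / M * (1 / 2) ^ (k + 1) := by
          refine Finset.sum_le_sum fun k hk ↦ ?_
          rw [div_mul_eq_mul_div, one_div_pow, mul_one_div, div_div, mul_comm]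
          gcongr
          exact h k (Finset.mem_range_succ_iff.1 hk)
      _ ≤ c / M * 1 := by
          rw [← Finset.mul_sum]
          gcongr
          exact sum_le_hasSum _ (fun _ _ ↦ by positivity) hgeom
      _ = c / M := mul_one _
  · calc _ ≤ ∑' i : ℕ, (1 / 2) ^ (m + 1) * (1 / 2 : ℝ) ^ (i + 1) :=
          Summable.tsum_le_tsum
            (fun i ↦ (dist_div_le_half_pow f g (i + (m + 1))).trans_eq (by ring))
            ((summable_nat_add_iff _).2 (summable_dist_div f g)) (hgeom.summable.mul_left _)
      _ = (1 / 2) ^ (m + 1) := by rw [tsum_mul_left, hgeom.tsum_eq, mul_one]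

end Bounded

end NatExt

theorem SensitiveWith.natExt {X : Type*} [MetricSpace X] [BoundedSpace X] {T : X → X}
    (hT : Continuous T) (hTs : Surjective T) (h : SensitiveWith dist T) :
    SensitiveWith (natExtDist T) (natExtMap T) := by
  obtain ⟨δ, hδ, hsens⟩ := h
  refine ⟨δ / (2 ^ (0 + 1) * (diam (univ : Set X) + 1)), by positivity, fun U hU hne ↦ ?_⟩
  obtain ⟨N, W, hW, hWne, hWU⟩ := NatExt.exists_isOpen_preimage_subset hT hU hne
  obtain ⟨a, ha, b, hb, n, hNn, hab⟩ := SensitiveWithConst.exists_gt hT hδ hsens hW hWne N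
  obtain ⟨f, rfl⟩ := NatExt.exists_apply_eq hTs a N
  obtain ⟨g, rfl⟩ := NatExt.exists_apply_eq hTs b N
  have hzero (f : NatExt T) : ((natExtMap T)^[n - N] f).1 0 = T^[n] (f.1 N) := by
    rw [NatExt.iterate_natExtMap_apply, ← NatExt.iterate_apply_self f N, ← iterate_add_apply,
      Nat.sub_add_cancel hNn.le]
  refine ⟨f, hWU ha, g, hWU hb, n - N, ?_⟩
  calc δ / _ < dist (T^[n] (f.1 N)) (T^[n] (g.1 N)) / (2 ^ (0 + 1) * (diam univ + 1)) := by
        gcongr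
    _ ≤ _ := by rw [← hzero, ← hzero]; exact NatExt.dist_div_le_natExtDist _ _ 0

theorem SensitiveWith.of_natExt {X : Type*} [MetricSpace X] [BoundedSpace X] {T : X → X}
    (hTs : Surjective T) (h : SensitiveWith (natExtDist T) (natExtMap T)) :
    SensitiveWith dist T := by
  obtain ⟨δ, hδ, hsens⟩ := h
  set M := diam (univ : Set X) + 1
  have hM : 0 < M := by positivity
  obtain ⟨m, hm⟩ := exists_pow_lt_of_lt_one (half_pos hδ) (by norm_num : (1 / 2 : ℝ) < 1)
  refine ⟨δ * M / 4, by positivity, fun U hU ⟨x, hx⟩ ↦ ?_⟩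
  obtain ⟨x', rfl⟩ := NatExt.exists_apply_eq hTs x 0
  set V : Set (NatExt T) := (fun f ↦ f.1 0) ⁻¹' U ∩
    ⋂ k ∈ Iic m, (fun f ↦ f.1 k) ⁻¹' ball (x'.1 k) (δ * M / 8)
  have hV : IsOpen V := (hU.preimage (NatExt.continuous_apply 0)).inter <|
    (finite_Iic m).isOpen_biInter fun k _ ↦ isOpen_ball.preimage (NatExt.continuous_apply k)
  have hx'V : x' ∈ V := ⟨hx, mem_iInter₂.2 fun k _ ↦ mem_ball_self (by positivity)⟩
  obtain ⟨f, ⟨hf, hf'⟩, g, ⟨hg, hg'⟩, n, hn⟩ := hsens V hV ⟨x', hx'V⟩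
  refine ⟨f.1 0, hf, g.1 0, hg, ?_⟩
  by_contra! hfg
  refine hn.not_ge ?_
  have hcoord : ∀ k ≤ n + m,
      dist (((natExtMap T)^[n] f).1 k) (((natExtMap T)^[n] g).1 k) ≤ δ * M / 4 := by
    intro k hk
    rcases le_total k n with hkn | hnk
    · rw [NatExt.iterate_natExtMap_apply_of_le f hkn, NatExt.iterate_natExtMap_apply_of_le g hkn]
      exact hfg _
    · rw [NatExt.iterate_natExtMap_apply_of_ge f hnk, NatExt.iterate_natExtMap_apply_of_ge g hnk]
      have hfk := mem_iInter₂.1 hf' (k - n) (by rw [mem_Iic]; omega)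
      have hgk := mem_iInter₂.1 hg' (k - n) (by rw [mem_Iic]; omega)
      rw [mem_preimage, mem_ball] at hfk hgk
      linarith [dist_triangle_right (f.1 (k - n)) (g.1 (k - n)) (x'.1 (k - n))]
  have htail : (1 / 2 : ℝ) ^ (n + m + 1) ≤ (1 / 2) ^ m :=
    pow_le_pow_of_le_one (by norm_num) (by norm_num) (by omega)
  calc natExtDist T _ _ ≤ δ * M / 4 / M + (1 / 2) ^ (n + m + 1) :=
        NatExt.natExtDist_le_of_forall_dist_le _ _ _ hcoord
    _ = δ / 4 + (1 / 2) ^ (n + m + 1) := by field_simp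
    _ ≤ δ := by linarith

/-- The natural extension is sensitive iff the original system is sensitive. -/
theorem natExt_sensitive_iff {X : Type*} [MetricSpace X] [CompactSpace X]
    {T : X → X} (hT : Continuous T) (hTs : Surjective T) :
    SensitiveWith (natExtDist T) (natExtMap T) ↔ SensitiveWith dist T :=
  ⟨SensitiveWith.of_natExt hTs, SensitiveWith.natExt hT hTs⟩
end

section
/- Let π: (X,T) → (Y,S) be an almost open factor map of compact metric dynamical systems. If (Y,S) is thickly sensitive, then (X,T) is thickly sensitive. -/
open Set Metric Function

/-- Thick sensitivity lifts through an almost open factor map. -/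
theorem thicklySensitive_lift_of_almostOpen {X Y : Type*}
    [MetricSpace X] [CompactSpace X] [MetricSpace Y] [CompactSpace Y]
    {T : X → X} {S : Y → Y} {π : X → Y}
    (hT : Continuous T) (hTs : Surjective T)
    (hS : Continuous S) (hSs : Surjective S)
    (hπ : Continuous π) (hπs : Surjective π) (hcomm : π ∘ T = S ∘ π)
    (hao : ∀ U : Set X, IsOpen U → U.Nonempty → (interior (π '' U)).Nonempty)
    (hYts : ThicklySensitive S) : ThicklySensitive T := by
  obtain ⟨δ, hδ, hsens⟩ := hYts
  have huc := CompactSpace.uniformContinuous_of_continuous hπ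
  obtain ⟨η, hη, hη'⟩ := Metric.uniformContinuous_iff.mp huc δ hδ
  refine ⟨η / 2, by linarith, fun U hU hUne k => ?_⟩
  have hV : IsOpen (interior (π '' U)) := isOpen_interior
  obtain ⟨n, hn⟩ := hsens (interior (π '' U)) hV (hao U hU hUne) k
  refine ⟨n, fun i hi => ?_⟩
  obtain ⟨y₁, hy₁, y₂, hy₂, hsep⟩ := hn i hi
  obtain ⟨x₁, hx₁, rfl⟩ := interior_subset hy₁
  obtain ⟨x₂, hx₂, rfl⟩ := interior_subset hy₂
  have hsemi : Function.Semiconj π T S := fun x => congrFun hcomm x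
  have hit := hsemi.iterate_right (n + i)
  rw [← hit x₁, ← hit x₂] at hsep
  refine ⟨x₁, hx₁, x₂, hx₂, ?_⟩
  by_contra h
  push_neg at h
  have : dist (T^[n+i] x₁) (T^[n+i] x₂) < η := by linarith
  exact absurd (hη' this) (not_lt.mpr hsep.le)
end
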